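/- Let A and B be full-support linear codes in F_q^n and suppose at least one of A, B is MDS. Then dim(A * B) ≥ min{n, dim A + dim B - 1}. -/

import Mathlib

open Finset

/-- Hamming weight of a vector. -/
noncomputable def wt {F : Type*} [Zero F] {ι : Type*} (c : ι → F) : ℕ :=
  Nat.card {i : ι // c i ≠ 0}

/-- `C` has minimum Hamming distance `d`. -/
def hasMinDist {F : Type*} [Field F] {ι : Type*} (C : Submodule F (ι → F)) (d : ℕ) : Prop :=
  (∃ c ∈ C, c ≠ 0 ∧ wt c = d) ∧ ∀ c ∈ C, c ≠ 0 → d ≤ wt c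

/-- The dual code with respect to the standard inner product. -/
def dualCode {F : Type*} [Field F] {ι : Type*} [Fintype ι] (C : Submodule F (ι → F)) :
    Submodule F (ι → F) where
  carrier := {x | ∀ c ∈ C, ∑ i, x i * c i = 0}
  add_mem' := by
    intro a b ha hb c hc
    simp only [Pi.add_apply, add_mul, Finset.sum_add_distrib, ha c hc, hb c hc, add_zero]
  zero_mem' := by intro c hc; simp
  smul_mem' := by
    intro r a ha c hc
    simp only [Pi.smul_apply, smul_eq_mul, mul_assoc, ← Finset.mul_sum, ha c hc, mul_zero]

/-- The Schur (coordinatewise) product code: the span of all coordinatewise products. -/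
def schurProd {F : Type*} [Field F] {ι : Type*} (A B : Submodule F (ι → F)) :
    Submodule F (ι → F) :=
  Submodule.span F {x | ∃ a ∈ A, ∃ b ∈ B, x = a * b}

/-- A code is full-support if every coordinate carries a nonzero entry of some codeword. -/
def fullSupport {F : Type*} [Field F] {ι : Type*} (A : Submodule F (ι → F)) : Prop :=
  ∀ i : ι, ∃ a ∈ A, a i ≠ 0

/-- Extension of scalars of a code from `Fq` to an extension field `K`, componentwise. -/
def extendCode (Fq K : Type*) [Field Fq] [Field K] [Algebra Fq K] {ι : Type*}
    (C : Submodule Fq (ι → Fq)) : Submodule K (ι → K) :=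
  Submodule.span K ((fun c (i : ι) => algebraMap Fq K (c i)) '' (C : Set (ι → Fq)))

/-!
Induct on `dim B`. For `i` in the support of `B`, the subcode `B'` of words vanishing at `i` has
dimension `dim B - 1` and strictly smaller support. An MDS code `A` of dimension `k` takes
arbitrary prescribed values on any `k` coordinates, so `A * B` maps onto `F^U` for every set `U`
of at most `k` coordinates in `supp B \ supp B'`, while `A * B'` vanishes on `U`. Hence
`dim (A * B) ≥ dim (A * B') + min (|supp B \ supp B'|, k)`, and together with
`dim B' ≤ |supp B'|` this propagates `dim (A * B) ≥ min (|supp B|, k + dim B - 1)`.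
-/

open Module

theorem Submodule.finrank_map_add_finrank_inf_ker {K V W : Type*} [DivisionRing K]
    [AddCommGroup V] [Module K V] [AddCommGroup W] [Module K W] [FiniteDimensional K V]
    (f : V →ₗ[K] W) (X : Submodule K V) :
    finrank K (X.map f) + finrank K ↥(X ⊓ LinearMap.ker f) = finrank K X := by
  rw [← LinearMap.range_domRestrict, ← Submodule.map_comap_subtype,
    Submodule.finrank_map_subtype_eq, ← LinearMap.ker_domRestrict]
  exact LinearMap.finrank_range_add_finrank_ker _

section Codes

variable {F : Type*} [Field F] {ι : Type*}

def restrictCoords (U : Finset ι) : (ι → F) →ₗ[F] (U → F) :=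
  LinearMap.funLeft F F Subtype.val

@[simp]
theorem restrictCoords_apply (U : Finset ι) (x : ι → F) (j : U) :
    restrictCoords U x j = x j :=
  rfl

def IsInterpolating (A : Submodule F (ι → F)) (k : ℕ) : Prop :=
  ∀ U : Finset ι, #U ≤ k → ∀ f : ι → F, ∃ a ∈ A, Set.EqOn a f U

theorem schurProd_comm (A B : Submodule F (ι → F)) : schurProd A B = schurProd B A := by
  unfold schurProd
  congr 1
  ext x
  constructor <;> rintro ⟨a, ha, b, hb, rfl⟩ <;> exact ⟨b, hb, a, ha, mul_comm _ _⟩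

theorem mul_mem_schurProd {A B : Submodule F (ι → F)} {a b : ι → F} (ha : a ∈ A)
    (hb : b ∈ B) : a * b ∈ schurProd A B :=
  Submodule.subset_span ⟨a, ha, b, hb, rfl⟩

theorem schurProd_mono_right (A : Submodule F (ι → F)) {B B' : Submodule F (ι → F)}
    (h : B' ≤ B) : schurProd A B' ≤ schurProd A B :=
  Submodule.span_le.2 <| by
    rintro _ ⟨a, ha, b, hb, rfl⟩
    exact mul_mem_schurProd ha (h hb)

variable [Fintype ι]

theorem wt_le_card_sub_card_of_eqOn_zero {c : ι → F} {V : Finset ι} (hc : Set.EqOn c 0 V) :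
    wt c ≤ Fintype.card ι - #V := by
  classical
  rw [wt, Nat.card_eq_fintype_card, Fintype.card_subtype, ← card_compl]
  exact card_le_card fun i hi => mem_compl.2 fun hiV => (mem_filter.1 hi).2 (hc hiV)

theorem isInterpolating_finrank_of_lt_wt {A : Submodule F (ι → F)}
    (hA : ∀ c ∈ A, c ≠ 0 → Fintype.card ι - finrank F A < wt c) :
    IsInterpolating A (finrank F A) := by
  intro U hU f
  have hk : finrank F A ≤ Fintype.card ι := by simpa using A.finrank_le
  obtain ⟨V, hUV, hV⟩ := exists_superset_card_eq hU hk
  set φ := restrictCoords (F := F) V ∘ₗ A.subtype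
  have hinj : Function.Injective φ := by
    refine (injective_iff_map_eq_zero φ).2 fun ⟨a, haA⟩ ha => Subtype.ext ?_
    by_contra ha0
    have := wt_le_card_sub_card_of_eqOn_zero fun i hi => congrFun ha ⟨i, hi⟩
    have := hA a haA ha0
    omega
  have hsurj : Function.Surjective φ :=
    (LinearMap.injective_iff_surjective_of_finrank_eq_finrank (by simp [hV])).1 hinj
  obtain ⟨⟨a, ha⟩, hφa⟩ := hsurj (restrictCoords V f)
  exact ⟨a, ha, fun i hi => congrFun hφa ⟨i, hUV hi⟩⟩

open Classical in
noncomputable def codeSupport (C : Submodule F (ι → F)) : Finset ι :=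
  {i | ∃ c ∈ C, c i ≠ 0}

theorem mem_codeSupport {C : Submodule F (ι → F)} {i : ι} :
    i ∈ codeSupport C ↔ ∃ c ∈ C, c i ≠ 0 := by
  simp [codeSupport]

theorem apply_eq_zero_of_notMem_codeSupport {C : Submodule F (ι → F)} {i : ι} {c : ι → F}
    (hi : i ∉ codeSupport C) (hc : c ∈ C) : c i = 0 :=
  not_not.1 fun h => hi (mem_codeSupport.2 ⟨c, hc, h⟩)

theorem codeSupport_mono {C D : Submodule F (ι → F)} (h : C ≤ D) :
    codeSupport C ⊆ codeSupport D := fun _ hi =>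
  let ⟨c, hc, hci⟩ := mem_codeSupport.1 hi
  mem_codeSupport.2 ⟨c, h hc, hci⟩

theorem codeSupport_eq_empty_iff {C : Submodule F (ι → F)} :
    codeSupport C = ∅ ↔ C = ⊥ := by
  simp only [eq_empty_iff_forall_notMem, mem_codeSupport, not_exists, not_and, not_not,
    Submodule.eq_bot_iff, funext_iff, Pi.zero_apply]
  exact ⟨fun h c hc i => h i c hc, fun h i c hc => h c hc i⟩

theorem codeSupport_eq_univ {C : Submodule F (ι → F)} (h : fullSupport C) :
    codeSupport C = univ :=
  eq_univ_of_forall fun i => mem_codeSupport.2 (h i)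

theorem finrank_le_card_codeSupport (C : Submodule F (ι → F)) :
    finrank F C ≤ #(codeSupport C) := by
  have hinj : Function.Injective (restrictCoords (F := F) (codeSupport C) ∘ₗ C.subtype) := by
    refine (injective_iff_map_eq_zero _).2 fun c hc => Subtype.ext (funext fun i => ?_)
    by_cases hi : i ∈ codeSupport C
    · exact congrFun hc ⟨i, hi⟩
    · exact apply_eq_zero_of_notMem_codeSupport hi c.2
  simpa using LinearMap.finrank_le_finrank_of_injective hinj

theorem codeSupport_schurProd_subset (A B : Submodule F (ι → F)) :
    codeSupport (schurProd A B) ⊆ codeSupport B := by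
  intro i hi
  by_contra hiB
  have hle : schurProd A B ≤ LinearMap.ker (LinearMap.proj i : (ι → F) →ₗ[F] F) := by
    refine Submodule.span_le.2 ?_
    rintro _ ⟨a, -, b, hb, rfl⟩
    simp [apply_eq_zero_of_notMem_codeSupport hiB hb]
  obtain ⟨x, hx, hxi⟩ := mem_codeSupport.1 hi
  exact hxi (hle hx)

theorem finrank_inf_ker_proj_add_one {B : Submodule F (ι → F)} {i : ι}
    (hi : i ∈ codeSupport B) :
    finrank F ↥(B ⊓ LinearMap.ker (LinearMap.proj i : (ι → F) →ₗ[F] F)) + 1 =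
      finrank F B := by
  obtain ⟨b, hb, hbi⟩ := mem_codeSupport.1 hi
  set π : (ι → F) →ₗ[F] F := LinearMap.proj i
  have hmap : finrank F (B.map π) = 1 :=
    le_antisymm (((B.map π).finrank_le).trans_eq (finrank_self F))
      (Submodule.one_le_finrank_iff.2 ((Submodule.ne_bot_iff _).2
        ⟨b i, Submodule.mem_map_of_mem hb, hbi⟩))
  rw [← B.finrank_map_add_finrank_inf_ker π, hmap, add_comm]

theorem notMem_codeSupport_inf_ker_proj (B : Submodule F (ι → F)) (i : ι) :
    i ∉ codeSupport (B ⊓ LinearMap.ker (LinearMap.proj i : (ι → F) →ₗ[F] F)) := fun h =>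
  let ⟨_, hc, hci⟩ := mem_codeSupport.1 h
  hci hc.2

theorem map_restrictCoords_schurProd_eq_top {A B : Submodule F (ι → F)} {k : ℕ}
    (hA : IsInterpolating A k) {U : Finset ι} (hUB : U ⊆ codeSupport B) (hUk : #U ≤ k) :
    (schurProd A B).map (restrictCoords U) = ⊤ := by
  classical
  rw [eq_top_iff, ← (Pi.basisFun F U).span_eq, Submodule.span_le]
  rintro _ ⟨j, rfl⟩
  obtain ⟨b, hb, hbj⟩ := mem_codeSupport.1 (hUB j.2)
  obtain ⟨a, ha, haU⟩ := hA U hUk (Pi.single (j : ι) (b j)⁻¹)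
  refine ⟨a * b, mul_mem_schurProd ha hb, funext fun j' => ?_⟩
  rw [restrictCoords_apply, Pi.mul_apply, haU j'.2, Pi.basisFun_apply]
  by_cases h : j' = j
  · subst h
    simp [hbj]
  · simp [h, Subtype.val_injective.ne h]

theorem finrank_schurProd_add_card_le [DecidableEq ι] {A B B' : Submodule F (ι → F)} {k : ℕ}
    (hA : IsInterpolating A k) (hB' : B' ≤ B) {U : Finset ι}
    (hU : U ⊆ codeSupport B \ codeSupport B') (hUk : #U ≤ k) :
    finrank F (schurProd A B') + #U ≤ finrank F (schurProd A B) := by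
  have hker : schurProd A B' ≤ schurProd A B ⊓ LinearMap.ker (restrictCoords U) := by
    refine le_inf (schurProd_mono_right A hB') fun x hx => funext fun j => ?_
    refine apply_eq_zero_of_notMem_codeSupport (c := x) (fun h => ?_) hx
    exact (mem_sdiff.1 (hU j.2)).2 (codeSupport_schurProd_subset A B' h)
  rw [← (schurProd A B).finrank_map_add_finrank_inf_ker (restrictCoords U),
    map_restrictCoords_schurProd_eq_top hA (hU.trans sdiff_subset) hUk, finrank_top,
    finrank_fintype_fun_eq_card, Fintype.card_coe]
  have := Submodule.finrank_mono hker
  omega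

theorem min_card_codeSupport_le_finrank_schurProd {A : Submodule F (ι → F)} {k : ℕ}
    (hk : 1 ≤ k) (hA : IsInterpolating A k) (B : Submodule F (ι → F)) :
    min #(codeSupport B) (k + finrank F B - 1) ≤ finrank F (schurProd A B) := by
  classical
  induction hm : finrank F B generalizing B with
  | zero => simp [codeSupport_eq_empty_iff.2 (Submodule.finrank_eq_zero.1 hm)]
  | succ m ih =>
    obtain ⟨i, hi⟩ : (codeSupport B).Nonempty := by
      rw [nonempty_iff_ne_empty, Ne, codeSupport_eq_empty_iff, ← Submodule.finrank_eq_zero]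
      omega
    have hB'B := finrank_inf_ker_proj_add_one hi
    set B' := B ⊓ LinearMap.ker (LinearMap.proj i : (ι → F) →ₗ[F] F)
    have hB' : finrank F B' = m := by omega
    have hsub : codeSupport B' ⊂ codeSupport B :=
      (ssubset_iff_of_subset (codeSupport_mono inf_le_left)).2
        ⟨i, hi, notMem_codeSupport_inf_ker_proj B i⟩
    obtain ⟨U, hU, hUcard⟩ :=
      exists_subset_card_eq (min_le_left #(codeSupport B \ codeSupport B') k)
    have hstep := finrank_schurProd_add_card_le (B' := B') hA inf_le_left hU
      (hUcard ▸ min_le_right _ _)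
    have hIH := ih B' hB'
    have hB'_le := hB' ▸ finrank_le_card_codeSupport B'
    have hlt := card_lt_card hsub
    rw [card_sdiff_of_subset hsub.subset] at hUcard
    omega

end Codes

theorem schur_dim_lower_bound_general {F : Type*} [Field F] {n : ℕ}
    (A B : Submodule F (Fin n → F))
    (hA : fullSupport A) (hB : fullSupport B)
    (hMDS : hasMinDist A (n - Module.finrank F A + 1) ∨
      hasMinDist B (n - Module.finrank F B + 1)) :
    min n (Module.finrank F A + Module.finrank F B - 1) ≤
      Module.finrank F (schurProd A B) := by
  wlog hMDS_A : hasMinDist A (n - finrank F A + 1) generalizing A B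
  · rw [schurProd_comm, add_comm (finrank F A)]
    exact this B A hB hA hMDS.symm (hMDS.resolve_left hMDS_A)
  obtain ⟨⟨c, hcA, hc0, -⟩, hwt⟩ := hMDS_A
  have hk : 1 ≤ finrank F A :=
    Submodule.one_le_finrank_iff.2 ((Submodule.ne_bot_iff A).2 ⟨c, hcA, hc0⟩)
  have hA_interp : IsInterpolating A (finrank F A) :=
    isInterpolating_finrank_of_lt_wt fun c hc hc0 => by
      rw [Fintype.card_fin]
      exact hwt c hc hc0
  simpa [codeSupport_eq_univ hB] using min_card_codeSupport_le_finrank_schurProd hk hA_interp B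

/-- for full-support codes `A`, `B`, at least one of which is MDS,
`dim (A * B) ≥ min {n, dim A + dim B - 1}`. -/
theorem schur_dim_lower_bound {F : Type*} [Field F] [Fintype F] {n : ℕ}
    (A B : Submodule F (Fin n → F))
    (hA : fullSupport A) (hB : fullSupport B)
    (hMDS : hasMinDist A (n - Module.finrank F A + 1) ∨
      hasMinDist B (n - Module.finrank F B + 1)) :
    min n (Module.finrank F A + Module.finrank F B - 1) ≤
      Module.finrank F (schurProd A B) :=
  schur_dim_lower_bound_general A B hA hB hMDS
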